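/- Let Ω be a finite set of players and G ≤ S_Ω. There exists a unique G-symmetric quasi-value on Ω (namely the Shapley value) if and only if G acts supertransitively on Ω, i.e. for every subset A ⊆ Ω the setwise stabilizer G_A = {g ∈ G : g(A) = A} acts transitively on A. -/

import Mathlib

open scoped BigOperators

/-- The space of cooperative games on player set `Ω`: real-valued functions on
coalitions vanishing on the empty coalition. -/
def GameSpace (Ω : Type*) [DecidableEq Ω] : Submodule ℝ (Finset Ω → ℝ) where
  carrier := {v | v ∅ = 0}
  add_mem' := by
    intro a b ha hb
    simp only [Set.mem_setOf_eq, Pi.add_apply] at *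
    simp [ha, hb]
  zero_mem' := rfl
  smul_mem' := by
    intro c v hv
    simp only [Set.mem_setOf_eq, Pi.smul_apply] at *
    simp [hv]

/-- A (linear) game value: a linear operator from games to payoff vectors. -/
abbrev GameValue (Ω : Type*) [DecidableEq Ω] := GameSpace Ω →ₗ[ℝ] (Ω → ℝ)

/-- Player `i` is a null player of the game `v`: `v(R ∪ {i}) = v(R)` for all `R`. -/
def IsNullPlayer {Ω : Type*} [DecidableEq Ω] (i : Ω) (v : GameSpace Ω) : Prop :=
  ∀ R : Finset Ω, (v : Finset Ω → ℝ) (insert i R) = (v : Finset Ω → ℝ) R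

/-- A quasi-value: a linear game value satisfying the null-player property and
efficiency. -/
def IsQuasiValue {Ω : Type*} [Fintype Ω] [DecidableEq Ω] (φ : GameValue Ω) : Prop :=
  (∀ (v : GameSpace Ω) (i : Ω), IsNullPlayer i v → φ v i = 0) ∧
  (∀ v : GameSpace Ω, ∑ i, φ v i = (v : Finset Ω → ℝ) Finset.univ)

/-- The action of a permutation on a game: `(g • v)(R) = v(g⁻¹(R))`. -/
def permGame {Ω : Type*} [DecidableEq Ω] (g : Equiv.Perm Ω) (v : GameSpace Ω) :
    GameSpace Ω :=
  ⟨fun R => (v : Finset Ω → ℝ) (R.image (g⁻¹ : Equiv.Perm Ω)), by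
    show (v : Finset Ω → ℝ) ((∅ : Finset Ω).image (g⁻¹ : Equiv.Perm Ω)) = 0
    rw [Finset.image_empty]
    exact v.2⟩

/-- `φ` is symmetric with respect to all permutations in `G`:
`φ(g • v) = g • φ(v)`, i.e. `φ(g • v)ᵢ = φ(v)_{g⁻¹ i}` for all `g ∈ G`. -/
def IsGSym {Ω : Type*} [DecidableEq Ω] (G : Subgroup (Equiv.Perm Ω))
    (φ : GameValue Ω) : Prop :=
  ∀ g ∈ G, ∀ (v : GameSpace Ω) (i : Ω), φ (permGame g v) i = φ v (g⁻¹ i)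

/-- The unanimity game `u_R` for a nonempty coalition `R`. -/
def unanimity {Ω : Type*} [DecidableEq Ω] (R : Finset Ω) (hR : R.Nonempty) :
    GameSpace Ω :=
  ⟨fun S => if R ⊆ S then (1 : ℝ) else 0, by
    show (if R ⊆ (∅ : Finset Ω) then (1 : ℝ) else 0) = 0
    simp [Finset.subset_empty, hR.ne_empty]⟩

/-- The Shapley value. -/
noncomputable def shapley (Ω : Type*) [Fintype Ω] [DecidableEq Ω] : GameValue Ω where
  toFun v i := ∑ R ∈ (Finset.univ.erase i).powerset,
      ((R.card.factorial * (Fintype.card Ω - R.card - 1).factorial : ℝ) /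
        (Fintype.card Ω).factorial) *
        ((v : Finset Ω → ℝ) (insert i R) - (v : Finset Ω → ℝ) R)
  map_add' a b := by
    funext i
    simp only [Submodule.coe_add, Pi.add_apply]
    rw [← Finset.sum_add_distrib]
    exact Finset.sum_congr rfl fun R _ => by ring
  map_smul' c a := by
    funext i
    simp only [Submodule.coe_smul, Pi.smul_apply, RingHom.id_apply, smul_eq_mul]
    rw [Finset.mul_sum]
    exact Finset.sum_congr rfl fun R _ => by ring

/-- A permutation group `G` acts supertransitively if for every subset `A`, the
setwise stabilizer `G_A = {g ∈ G : g(A) = A}` acts transitively on `A`. -/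
def Supertransitive {Ω : Type*} [DecidableEq Ω] (G : Subgroup (Equiv.Perm Ω)) : Prop :=
  ∀ A : Finset Ω, ∀ i ∈ A, ∀ j ∈ A, ∃ g ∈ G, A.image g = A ∧ g i = j

/-!
Every game is the combination `∑ R, d_R(v) • u_R` of unanimity games whose coefficients are its
Harsanyi dividends `d_R(v)` (the Möbius transform of `v`), so a linear value is determined by its
values on the `u_R`. For a quasi-value, `φ(u_R)` vanishes off `R` (null players) and sums to `1`
(efficiency); conversely any family `ψ R` of such vectors defines the quasi-value
`v ↦ ∑ R, d_R(v) • ψ R`, which is `G`-symmetric as soon as `ψ` is `G`-equivariant.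

If `G` is supertransitive, symmetry makes `φ(u_R)` constant, hence uniform, on `R`, so any two
`G`-symmetric quasi-values agree; the Shapley value is one of them. Otherwise some `A ∋ i, j`
admits no `g ∈ G` with `g • A = A` and `g i = j`. Averaging over `G` the family that gives all of
`A`'s dividend to `i` and splits every other dividend uniformly yields a `G`-equivariant family
that gives `j` strictly less than `1 / #A` in `u_A` (the stabilizer of `A` contributes `0`), hence
a quasi-value different from the one built from the uniform family.
-/

open Finset Pointwise

section HarsanyiDividend

variable {α β : Type*} [DecidableEq α] [CommRing β]

def harsanyiDividend (T : Finset α) (f : Finset α → β) : β :=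
  ∑ S ∈ T.powerset, (-1) ^ #(T \ S) * f S

lemma sum_Icc_neg_one_pow_card_sdiff {S T : Finset α} (hST : S ⊆ T) :
    ∑ U ∈ Icc S T, (-1 : β) ^ #(U \ S) = if S = T then 1 else 0 := by
  have hdisj : ∀ W ∈ (T \ S).powerset, Disjoint S W := fun W hW =>
    disjoint_of_subset_right (mem_powerset.mp hW) disjoint_sdiff
  rw [Icc_eq_image_powerset hST, sum_image fun W₁ hW₁ W₂ hW₂ h => by
    rw [← union_sdiff_cancel_left (hdisj W₁ hW₁), ← union_sdiff_cancel_left (hdisj W₂ hW₂)]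
    exact congrArg (· \ S) h]
  rw [sum_congr rfl fun W hW => by rw [union_sdiff_cancel_left (hdisj W hW)]]
  have := congrArg (Int.cast : ℤ → β) (sum_powerset_neg_one_pow_card (x := T \ S))
  push_cast at this
  rw [this]
  exact if_congr (sdiff_eq_empty_iff_subset.trans ⟨hST.antisymm, fun h => h ▸ subset_rfl⟩) rfl rfl

lemma sum_powerset_harsanyiDividend (f : Finset α → β) (T : Finset α) :
    ∑ U ∈ T.powerset, harsanyiDividend U f = f T := by
  unfold harsanyiDividend
  rw [sum_comm' (t' := T.powerset) (s' := fun S => Icc S T) fun U S => by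
    simp only [mem_powerset, mem_Icc]
    exact ⟨fun h => ⟨⟨h.2, h.1⟩, h.2.trans h.1⟩, fun h => ⟨h.1.2, h.1.1⟩⟩]
  simp_rw [← sum_mul]
  rw [sum_congr rfl fun S hS => by rw [sum_Icc_neg_one_pow_card_sdiff (mem_powerset.mp hS)]]
  simp

lemma harsanyiDividend_empty (f : Finset α → β) : harsanyiDividend ∅ f = f ∅ := by
  simp [harsanyiDividend]

lemma harsanyiDividend_eq_zero_of_null {T : Finset α} {f : Finset α → β} {i : α} (hi : i ∈ T)
    (hf : ∀ S, f (insert i S) = f S) : harsanyiDividend T f = 0 := by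
  unfold harsanyiDividend
  rw [← insert_erase hi, sum_powerset_insert (notMem_erase i T), ← sum_add_distrib]
  refine sum_eq_zero fun S hS => ?_
  have hiS : i ∉ S := fun h => notMem_erase i T (mem_powerset.mp hS h)
  rw [insert_sdiff_insert, sdiff_insert_of_notMem (notMem_erase i T),
    insert_sdiff_of_notMem _ hiS, card_insert_of_notMem (notMem_sdiff_of_notMem_left
      (notMem_erase i T)), hf, pow_succ]
  ring

lemma harsanyiDividend_unanimity (A T : Finset α) :
    harsanyiDividend T (fun S => if A ⊆ S then (1 : β) else 0) = if T = A then 1 else 0 := by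
  by_cases hTA : T = A
  · subst hTA
    rw [harsanyiDividend, sum_eq_single T (fun S hS hST => by
      rw [if_neg fun h => hST ((mem_powerset.mp hS).antisymm h), mul_zero])
      (fun h => absurd (mem_powerset_self T) h)]
    simp
  rw [if_neg hTA]
  by_cases hAT : A ⊆ T
  · obtain ⟨i, hiT, hiA⟩ := exists_of_ssubset (ssubset_of_subset_of_ne hAT (Ne.symm hTA))
    exact harsanyiDividend_eq_zero_of_null hiT fun S => by
      simp only [subset_insert_iff_of_notMem hiA]
  · refine sum_eq_zero fun S hS => ?_
    exact mul_eq_zero_of_right _ (if_neg fun h : A ⊆ S => hAT (h.trans (mem_powerset.mp hS)))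

lemma harsanyiDividend_comp_smul {G : Type*} [Group G] [MulAction G α] (g : G)
    (f : Finset α → β) (T : Finset α) :
    harsanyiDividend T (fun S => f (g • S)) = harsanyiDividend (g • T) f := by
  unfold harsanyiDividend
  refine sum_nbij' (g • ·) (g⁻¹ • ·) ?_ ?_ ?_ ?_ ?_
  · intro S hS
    simpa using smul_finset_subset_smul_finset (a := g) (mem_powerset.mp hS)
  · intro S hS
    simpa [subset_smul_finset_iff] using mem_powerset.mp hS
  · intro S _; simp
  · intro S _; simp
  · intro S _
    simp [← smul_finset_sdiff, card_smul_finset]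

end HarsanyiDividend

noncomputable section

variable {Ω : Type*} [DecidableEq Ω]

@[simp]
lemma GameSpace.coe_apply_empty (v : GameSpace Ω) : (v : Finset Ω → ℝ) ∅ = 0 := v.2

lemma coe_permGame (g : Equiv.Perm Ω) (v : GameSpace Ω) :
    (permGame g v : Finset Ω → ℝ) = fun S => (v : Finset Ω → ℝ) (g⁻¹ • S) := rfl

lemma isNullPlayer_unanimity {A : Finset Ω} (hA : A.Nonempty) {i : Ω} (hi : i ∉ A) :
    IsNullPlayer i (unanimity A hA) := fun S => by
  simp only [unanimity, subset_insert_iff_of_notMem hi]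

lemma permGame_unanimity_of_smul_eq {A : Finset Ω} (hA : A.Nonempty) {g : Equiv.Perm Ω}
    (hg : g • A = A) : permGame g (unanimity A hA) = unanimity A hA := by
  refine Subtype.ext (funext fun S => ?_)
  show (if A ⊆ g⁻¹ • S then (1 : ℝ) else 0) = if A ⊆ S then 1 else 0
  simp only [← smul_finset_subset_iff, hg]

def uniformSharing (R : Finset Ω) (i : Ω) : ℝ := if i ∈ R then (#R : ℝ)⁻¹ else 0

lemma uniformSharing_smul {G : Type*} [Group G] [MulAction G Ω] (g : G) (R : Finset Ω)
    (i : Ω) : uniformSharing (g • R) (g • i) = uniformSharing R i := by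
  simp only [uniformSharing, smul_mem_smul_finset_iff, card_smul_finset]

section Averaging

variable {H : Type*} [Group H] [Fintype H] [MulAction H Ω]

variable (H) in
def averageSharing (ψ : Finset Ω → Ω → ℝ) (R : Finset Ω) (i : Ω) : ℝ :=
  (Fintype.card H : ℝ)⁻¹ * ∑ h : H, ψ (h • R) (h • i)

lemma averageSharing_smul (ψ : Finset Ω → Ω → ℝ) (g : H) (R : Finset Ω) (i : Ω) :
    averageSharing H ψ (g • R) (g • i) = averageSharing H ψ R i := by
  simp only [averageSharing, smul_smul]
  congr 1
  exact Equiv.sum_comp (Equiv.mulRight g) fun h => ψ (h • R) (h • i)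

lemma averageSharing_update_lt {A : Finset Ω} {i j : Ω} (hi : i ∈ A) (hj : j ∈ A)
    (hij : ∀ h : H, h • A = A → h • i ≠ j) :
    averageSharing H (Function.update uniformSharing A (Pi.single i 1)) A j
      < uniformSharing A j := by
  have hterm : ∀ h : H, Function.update uniformSharing A (Pi.single i 1) (h • A) (h • j)
      = if h • A = A then 0 else uniformSharing A j := by
    intro h
    by_cases hA : h • A = A
    · rw [if_pos hA, hA, Function.update_self, Pi.single_apply, if_neg]
      intro hji
      exact hij h⁻¹ (by rw [inv_smul_eq_iff, hA]) (by rw [← hji, inv_smul_smul])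
    · rw [if_neg hA, Function.update_of_ne hA, uniformSharing_smul]
  have hpos : 0 < uniformSharing A j := by
    rw [uniformSharing, if_pos hj]
    exact inv_pos.mpr (Nat.cast_pos.mpr (card_pos.mpr ⟨i, hi⟩))
  have hlt : ∑ h : H, (if h • A = A then 0 else uniformSharing A j)
      < ∑ _h : H, uniformSharing A j :=
    sum_lt_sum (fun h _ => by split_ifs <;> linarith)
      ⟨1, mem_univ _, by rw [one_smul, if_pos rfl]; exact hpos⟩
  rw [sum_const, card_univ, nsmul_eq_mul] at hlt
  rw [averageSharing, sum_congr rfl fun h _ => hterm h]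
  calc _ < (Fintype.card H : ℝ)⁻¹ * (Fintype.card H * uniformSharing A j) := by gcongr
    _ = uniformSharing A j := by field_simp

end Averaging

variable [Fintype Ω]

def dividendValue (ψ : Finset Ω → Ω → ℝ) : GameValue Ω where
  toFun v i := ∑ R, harsanyiDividend R (v : Finset Ω → ℝ) * ψ R i
  map_add' v w := by
    ext i
    simp [harsanyiDividend, mul_add, add_mul, sum_add_distrib]
  map_smul' c v := by
    ext i
    simp [harsanyiDividend, mul_sum, sum_mul, mul_assoc, mul_left_comm]

lemma dividendValue_apply (ψ : Finset Ω → Ω → ℝ) (v : GameSpace Ω) (i : Ω) :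
    dividendValue ψ v i = ∑ R, harsanyiDividend R (v : Finset Ω → ℝ) * ψ R i := rfl

lemma dividendValue_unanimity (ψ : Finset Ω → Ω → ℝ) (A : Finset Ω) (hA : A.Nonempty) :
    dividendValue ψ (unanimity A hA) = ψ A := by
  ext i
  simp only [dividendValue_apply]
  rw [sum_eq_single A (fun R _ hRA => ?_) (fun h => absurd (mem_univ A) h)]
  · rw [unanimity, harsanyiDividend_unanimity, if_pos rfl, one_mul]
  · rw [unanimity, harsanyiDividend_unanimity, if_neg hRA, zero_mul]

structure IsDividendSharing (ψ : Finset Ω → Ω → ℝ) : Prop where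
  eq_zero_of_notMem : ∀ R i, i ∉ R → ψ R i = 0
  sum_eq_one : ∀ R : Finset Ω, R.Nonempty → ∑ i, ψ R i = 1

lemma IsDividendSharing.isQuasiValue {ψ : Finset Ω → Ω → ℝ} (hψ : IsDividendSharing ψ) :
    IsQuasiValue (dividendValue ψ) := by
  refine ⟨fun v i hnull => sum_eq_zero fun R _ => ?_, fun v => ?_⟩
  · by_cases hi : i ∈ R
    · rw [harsanyiDividend_eq_zero_of_null hi hnull, zero_mul]
    · rw [hψ.eq_zero_of_notMem R i hi, mul_zero]
  · have hshare : ∀ R, ∑ i, harsanyiDividend R (v : Finset Ω → ℝ) * ψ R i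
        = harsanyiDividend R (v : Finset Ω → ℝ) := fun R => by
      rw [← mul_sum]
      rcases R.eq_empty_or_nonempty with rfl | hR
      · rw [harsanyiDividend_empty, GameSpace.coe_apply_empty, zero_mul]
      · rw [hψ.sum_eq_one R hR, mul_one]
    simp only [dividendValue_apply]
    rw [sum_comm, sum_congr rfl fun R _ => hshare R, ← powerset_univ,
      sum_powerset_harsanyiDividend]

lemma isGSym_dividendValue (G : Subgroup (Equiv.Perm Ω)) {ψ : Finset Ω → Ω → ℝ}
    (hψ : ∀ g ∈ G, ∀ R i, ψ (g • R) (g • i) = ψ R i) : IsGSym G (dividendValue ψ) := by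
  intro g hg v i
  simp only [dividendValue_apply]
  calc ∑ R, harsanyiDividend R (permGame g v : Finset Ω → ℝ) * ψ R i
      = ∑ R, harsanyiDividend (g • R) (permGame g v : Finset Ω → ℝ) * ψ (g • R) i :=
        (Equiv.sum_comp (MulAction.toPerm g) _).symm
    _ = ∑ R, harsanyiDividend R (v : Finset Ω → ℝ) * ψ R (g⁻¹ i) := by
        refine sum_congr rfl fun R _ => ?_
        rw [coe_permGame, harsanyiDividend_comp_smul, inv_smul_smul, ← hψ g hg R (g⁻¹ i)]
        simp

lemma isDividendSharing_uniformSharing : IsDividendSharing (uniformSharing (Ω := Ω)) where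
  eq_zero_of_notMem R i hi := if_neg hi
  sum_eq_one R hR := by
    simp only [uniformSharing]
    rw [sum_ite_mem, univ_inter, sum_const, nsmul_eq_mul,
      mul_inv_cancel₀ (Nat.cast_ne_zero.mpr hR.card_pos.ne')]

lemma isDividendSharing_update_single {A : Finset Ω} {i : Ω} (hi : i ∈ A) :
    IsDividendSharing (Function.update uniformSharing A (Pi.single i 1)) where
  eq_zero_of_notMem R x hx := by
    rcases eq_or_ne R A with rfl | hRA
    · rw [Function.update_self, Pi.single_eq_of_ne (by rintro rfl; exact hx hi)]
    · rw [Function.update_of_ne hRA]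
      exact isDividendSharing_uniformSharing.eq_zero_of_notMem R x hx
  sum_eq_one R hR := by
    rcases eq_or_ne R A with rfl | hRA
    · rw [Function.update_self, sum_pi_single', if_pos (mem_univ i)]
    · rw [Function.update_of_ne hRA]
      exact isDividendSharing_uniformSharing.sum_eq_one R hR

lemma IsDividendSharing.average {H : Type*} [Group H] [Fintype H] [MulAction H Ω]
    {ψ : Finset Ω → Ω → ℝ} (hψ : IsDividendSharing ψ) :
    IsDividendSharing (averageSharing H ψ) where
  eq_zero_of_notMem R i hi := by
    rw [averageSharing, sum_eq_zero fun h _ => hψ.eq_zero_of_notMem _ _ (by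
      rwa [smul_mem_smul_finset_iff]), mul_zero]
  sum_eq_one R hR := by
    have hshare : ∀ h : H, ∑ i, ψ (h • R) (h • i) = 1 := fun h =>
      (Equiv.sum_comp (MulAction.toPerm h) (ψ (h • R))).trans (hψ.sum_eq_one _ hR.smul_finset)
    simp only [averageSharing, ← mul_sum]
    rw [sum_comm, sum_congr rfl fun h _ => hshare h, sum_const, card_univ, nsmul_one,
      inv_mul_cancel₀ (Nat.cast_ne_zero.mpr Fintype.card_ne_zero)]

lemma exists_ne_of_not_supertransitive {G : Subgroup (Equiv.Perm Ω)} (hG : ¬Supertransitive G) :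
    ∃ φ φ' : GameValue Ω, IsQuasiValue φ ∧ IsGSym G φ ∧ IsQuasiValue φ' ∧ IsGSym G φ' ∧
      φ ≠ φ' := by
  simp only [Supertransitive, not_forall, not_exists, not_and] at hG
  obtain ⟨A, i, hi, j, hj, hij⟩ := hG
  classical
  set ψ := averageSharing G (Function.update uniformSharing A (Pi.single i 1))
  refine ⟨dividendValue ψ, dividendValue uniformSharing,
    (isDividendSharing_update_single hi).average.isQuasiValue,
    isGSym_dividendValue G fun g hg R x => averageSharing_smul (H := G) _ ⟨g, hg⟩ R x,
    isDividendSharing_uniformSharing.isQuasiValue,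
    isGSym_dividendValue G fun g _ => uniformSharing_smul g, fun hψ => ?_⟩
  have hA : A.Nonempty := ⟨i, hi⟩
  have hu : ψ A j = uniformSharing A j := by
    rw [← dividendValue_unanimity ψ A hA, hψ, dividendValue_unanimity]
  exact (averageSharing_update_lt (H := G) hi hj fun h hhA => hij h.1 h.2 hhA).ne hu

lemma IsQuasiValue.apply_unanimity_of_supertransitive {G : Subgroup (Equiv.Perm Ω)}
    (hG : Supertransitive G) {φ : GameValue Ω} (hφ : IsQuasiValue φ) (hsym : IsGSym G φ)
    (A : Finset Ω) (hA : A.Nonempty) : φ (unanimity A hA) = uniformSharing A := by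
  set u := unanimity A hA
  have hout : ∀ i ∉ A, φ u i = 0 := fun i hi => hφ.1 u i (isNullPlayer_unanimity hA hi)
  have hconst : ∀ i ∈ A, ∀ j ∈ A, φ u j = φ u i := by
    intro i hi j hj
    obtain ⟨g, hgG, hgA, hgij⟩ := hG A i hi j hj
    calc φ u j = φ (permGame g u) j := by rw [permGame_unanimity_of_smul_eq hA hgA]
      _ = φ u (g⁻¹ j) := hsym g hgG u j
      _ = φ u i := by rw [← hgij]; exact congrArg (φ u) (inv_smul_smul g i)
  obtain ⟨i₀, hi₀⟩ := hA
  have hval : (#A : ℝ) * φ u i₀ = 1 := by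
    rw [← (hφ.2 u).trans (if_pos (subset_univ A)),
      ← sum_subset (subset_univ A) fun i _ hi => hout i hi,
      sum_congr rfl fun j hj => hconst i₀ hi₀ j hj, sum_const, nsmul_eq_mul]
  ext i
  rw [uniformSharing]
  split_ifs with hi
  · rw [hconst i₀ hi₀ i hi, eq_inv_of_mul_eq_one_right hval]
  · exact hout i hi

lemma eq_sum_harsanyiDividend_smul_unanimity (v : GameSpace Ω) :
    v = ∑ R, if h : R.Nonempty then harsanyiDividend R (v : Finset Ω → ℝ) • unanimity R h
      else 0 := by
  refine Subtype.ext (funext fun S => ?_)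
  rw [Submodule.coe_sum, Finset.sum_apply]
  have hterm : ∀ R : Finset Ω,
      ((if h : R.Nonempty then harsanyiDividend R (v : Finset Ω → ℝ) • unanimity R h
        else 0 : GameSpace Ω) : Finset Ω → ℝ) S
        = if R ∈ S.powerset then harsanyiDividend R (v : Finset Ω → ℝ) else 0 := by
    intro R
    rcases R.eq_empty_or_nonempty with rfl | hR
    · simp [harsanyiDividend_empty]
    · rw [dif_pos hR, Submodule.coe_smul, Pi.smul_apply, smul_eq_mul]
      show _ * (if R ⊆ S then (1 : ℝ) else 0) = _
      simp only [mem_powerset, mul_ite, mul_one, mul_zero]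
  rw [sum_congr rfl fun R _ => hterm R, sum_ite_mem, univ_inter, sum_powerset_harsanyiDividend]

lemma GameValue.ext_of_unanimity {φ φ' : GameValue Ω}
    (h : ∀ A hA, φ (unanimity A hA) = φ' (unanimity A hA)) : φ = φ' := by
  refine LinearMap.ext fun v => ?_
  rw [eq_sum_harsanyiDividend_smul_unanimity v, map_sum, map_sum]
  refine sum_congr rfl fun R _ => ?_
  split_ifs with hR
  · rw [map_smul, map_smul, h]
  · rw [map_zero, map_zero]

lemma eq_of_supertransitive {G : Subgroup (Equiv.Perm Ω)} (hG : Supertransitive G)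
    {φ φ' : GameValue Ω} (hφ : IsQuasiValue φ) (hsym : IsGSym G φ) (hφ' : IsQuasiValue φ')
    (hsym' : IsGSym G φ') : φ = φ' :=
  GameValue.ext_of_unanimity fun A hA => by
    rw [hφ.apply_unanimity_of_supertransitive hG hsym,
      hφ'.apply_unanimity_of_supertransitive hG hsym']

section Shapley

open Nat

def shapleyWeight (n k : ℕ) : ℝ := (k ! * (n - k - 1)! : ℝ) / n !

lemma shapleyWeight_telescope {n t : ℕ} (ht : 1 ≤ t) (htn : t ≤ n) :
    t * shapleyWeight n (t - 1) - (n - t : ℕ) * shapleyWeight n t = if t = n then 1 else 0 := by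
  have hfact : (t : ℝ) * (t - 1)! = t ! := by exact_mod_cast Nat.mul_factorial_pred (by omega)
  unfold shapleyWeight
  rw [show n - (t - 1) - 1 = n - t by omega]
  split_ifs with h
  · subst h
    field_simp
    simp [hfact]
  · have hfact' : ((n - t : ℕ) : ℝ) * (n - t - 1)! = (n - t)! := by
      exact_mod_cast Nat.mul_factorial_pred (by omega)
    field_simp
    linear_combination (n - t)! * hfact - t ! * hfact'

lemma shapley_apply (v : GameSpace Ω) (i : Ω) :
    shapley Ω v i = ∑ R ∈ (univ.erase i).powerset, shapleyWeight (Fintype.card Ω) #R *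
      ((v : Finset Ω → ℝ) (insert i R) - (v : Finset Ω → ℝ) R) := rfl

lemma shapley_apply_eq_sum (v : GameSpace Ω) (i : Ω) :
    shapley Ω v i = ∑ S, (if i ∈ S then shapleyWeight (Fintype.card Ω) (#S - 1)
      else -shapleyWeight (Fintype.card Ω) #S) * (v : Finset Ω → ℝ) S := by
  rw [← powerset_univ, ← insert_erase (mem_univ i), sum_powerset_insert (notMem_erase i _),
    shapley_apply, ← sum_add_distrib]
  refine sum_congr rfl fun R hR => ?_
  have hiR : i ∉ R := fun h => notMem_erase i _ (mem_powerset.mp hR h)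
  rw [if_neg hiR, if_pos (mem_insert_self i R), card_insert_of_notMem hiR, Nat.add_sub_cancel]
  ring

lemma isQuasiValue_shapley : IsQuasiValue (shapley Ω) := by
  refine ⟨fun v i hnull => sum_eq_zero fun R _ => by rw [hnull R, sub_self, mul_zero],
    fun v => ?_⟩
  have hcoeff : ∀ S : Finset Ω, (∑ i, if i ∈ S then shapleyWeight (Fintype.card Ω) (#S - 1)
      else -shapleyWeight (Fintype.card Ω) #S) * (v : Finset Ω → ℝ) S
      = if S = univ then (v : Finset Ω → ℝ) S else 0 := by
    intro S
    rcases S.eq_empty_or_nonempty with rfl | hS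
    · simp
    rw [sum_ite, filter_univ_mem, filter_not, filter_univ_mem, sum_const, sum_const,
      card_univ_sdiff, nsmul_eq_mul, nsmul_eq_mul, mul_neg, ← sub_eq_add_neg,
      shapleyWeight_telescope hS.card_pos (card_le_univ S)]
    simp only [card_eq_iff_eq_univ, ite_mul, one_mul, zero_mul]
  simp only [shapley_apply_eq_sum]
  rw [sum_comm]
  simp_rw [← sum_mul]
  rw [sum_congr rfl fun S _ => hcoeff S, sum_ite_eq' univ univ, if_pos (mem_univ _)]

lemma isGSym_shapley (G : Subgroup (Equiv.Perm Ω)) : IsGSym G (shapley Ω) := by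
  intro g _ v i
  rw [shapley_apply_eq_sum, shapley_apply_eq_sum, ← Equiv.sum_comp (MulAction.toPerm g)]
  refine sum_congr rfl fun S _ => ?_
  simp only [MulAction.toPerm_apply, coe_permGame, inv_smul_smul, card_smul_finset,
    ← inv_smul_mem_iff, Equiv.Perm.smul_def]

end Shapley

end

/-- there exists a unique `G`-symmetric quasi-value (namely the
Shapley value) if and only if `G` acts supertransitively on `Ω`. -/
theorem stmt6 {Ω : Type*} [Fintype Ω] [DecidableEq Ω] (G : Subgroup (Equiv.Perm Ω)) :
    ({φ : GameValue Ω | IsQuasiValue φ ∧ IsGSym G φ} = {shapley Ω}) ↔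
      Supertransitive G := by
  constructor
  · intro hset
    by_contra hG
    obtain ⟨φ, φ', hφ, hsym, hφ', hsym', hne⟩ := exists_ne_of_not_supertransitive hG
    have hmem : ∀ ψ ∈ {φ : GameValue Ω | IsQuasiValue φ ∧ IsGSym G φ}, ψ = shapley Ω :=
      fun ψ h => by rwa [hset] at h
    exact hne ((hmem φ ⟨hφ, hsym⟩).trans (hmem φ' ⟨hφ', hsym'⟩).symm)
  · intro hG
    exact Set.eq_singleton_iff_unique_mem.mpr ⟨⟨isQuasiValue_shapley, isGSym_shapley G⟩,
      fun φ hφ => eq_of_supertransitive hG hφ.1 hφ.2 isQuasiValue_shapley (isGSym_shapley G)⟩
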